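/- arXiv:2605.31413 — 2 statements merged into one kernel-verified Lean document; each statement's English description precedes it below -/
import Mathlib

section
/- Let f : ℝ^p → ℝ be m-strongly convex with unique minimizer θ* (so ∇f(θ*) = 0), and let Y ∼ π where π ∝ exp(-f). Then E[‖Y - θ*‖²] ≤ p/m. -/
open MeasureTheory

open Set Real Metric


section Ray

lemma ray1d (n : ℕ) (m : ℝ) (h D : ℝ → ℝ)
    (hder : ∀ r, HasDerivAt h (D r) r)
    (hmono : Monotone D) (hD0 : D 0 = 0)
    (hgrow : ∀ r : ℝ, 0 ≤ r → m * r ≤ D r)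
    (hlow : ∀ r : ℝ, 0 ≤ r → h 0 ≤ h r)
    (hint0 : IntegrableOn (fun r => r ^ n * Real.exp (-h r)) (Set.Ioi 0))
    (hint2 : IntegrableOn (fun r => r ^ n * (r ^ 2 * Real.exp (-h r))) (Set.Ioi 0)) :
    m * ∫ r in Set.Ioi (0:ℝ), r ^ n * (r ^ 2 * Real.exp (-h r)) ≤
      ((n : ℝ) + 1) * ∫ r in Set.Ioi (0:ℝ), r ^ n * Real.exp (-h r) := by
  have hcont : Continuous h := by
    have : Differentiable ℝ h := fun r => (hder r).differentiableAt
    exact this.continuous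
  have hce : Continuous (fun r : ℝ => Real.exp (-h r)) := (hcont.neg).rexp
  set q : ℝ → ℝ := fun r => r ^ (n+1) * D r * Real.exp (-h r) with hq_def
  have hq_meas : Measurable q :=
    ((measurable_id.pow_const _).mul hmono.measurable).mul hce.measurable
  set G : ℝ → ℝ := fun r => r ^ (n+1) * Real.exp (-h r) with hG_def
  have hG : ∀ r : ℝ, HasDerivAt G ((((n:ℝ)+1) * r ^ n * Real.exp (-h r)) - q r) r := by
    intro r
    have h1 : HasDerivAt (fun r : ℝ => r ^ (n+1)) ((((n:ℝ))+1) * r ^ n) r := by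
      simpa using hasDerivAt_pow (n+1) r
    have h2 : HasDerivAt (fun r : ℝ => Real.exp (-h r)) (Real.exp (-h r) * (-D r)) r :=
      ((hder r).neg).exp
    have := h1.mul h2
    refine this.congr_deriv ?_
    simp only [hq_def]
    ring
  have key : ∀ N : ℕ, m * ∫ r in Set.Ioc (0:ℝ) (N:ℝ), r ^ n * (r ^ 2 * Real.exp (-h r)) ≤
      ((n : ℝ) + 1) * ∫ r in Set.Ioi (0:ℝ), r ^ n * Real.exp (-h r) := by
    intro N
    set R : ℝ := (N : ℝ) with hR
    have hR0 : (0:ℝ) ≤ R := Nat.cast_nonneg N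
    have hq_int : IntegrableOn q (Set.Ioc 0 R) := by
      apply Measure.integrableOn_of_bounded (M := R ^ (n+1) * D R * Real.exp (-h 0))
      · exact (measure_Ioc_lt_top).ne
      · exact hq_meas.aestronglyMeasurable
      · filter_upwards [ae_restrict_mem measurableSet_Ioc] with r hr
        have hr0 : 0 < r := hr.1
        have hDr0 : 0 ≤ D r := hD0 ▸ hmono hr0.le
        have hDrR : D r ≤ D R := hmono hr.2
        have hqnn : 0 ≤ q r := by
          apply mul_nonneg (mul_nonneg (pow_nonneg hr0.le _) hDr0) (Real.exp_nonneg _)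
        rw [Real.norm_eq_abs, abs_of_nonneg hqnn]
        have he : Real.exp (-h r) ≤ Real.exp (-h 0) :=
          Real.exp_le_exp.2 (neg_le_neg (hlow r hr0.le))
        have hDR0 : 0 ≤ D R := hD0 ▸ hmono hR0
        calc r ^ (n+1) * D r * Real.exp (-h r)
            ≤ R ^ (n+1) * D R * Real.exp (-h r) := by
              apply mul_le_mul_of_nonneg_right _ (Real.exp_nonneg _)
              exact mul_le_mul (pow_le_pow_left₀ hr0.le hr.2 _) hDrR hDr0
                (pow_nonneg hR0 _)
          _ ≤ R ^ (n+1) * D R * Real.exp (-h 0) := by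
              apply mul_le_mul_of_nonneg_left he (mul_nonneg (pow_nonneg hR0 _) hDR0)
    have hc_int : IntegrableOn (fun r => (((n:ℝ))+1) * r ^ n * Real.exp (-h r))
        (Set.Ioc 0 R) := by
      apply Continuous.integrableOn_Ioc
      exact (continuous_const.mul (continuous_id.pow _)).mul hce
    have hFTC : ∫ r in Set.Ioc (0:ℝ) R, ((((n:ℝ)+1) * r ^ n * Real.exp (-h r)) - q r)
        = G R - G 0 := by
      rw [← intervalIntegral.integral_of_le hR0]
      apply intervalIntegral.integral_eq_sub_of_hasDerivAt (fun t _ => hG t)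
      rw [intervalIntegrable_iff_integrableOn_Ioc_of_le hR0]
      exact hc_int.sub hq_int
    have hG0 : G 0 = 0 := by simp [hG_def]
    have hGR : 0 ≤ G R := mul_nonneg (pow_nonneg hR0 _) (Real.exp_nonneg _)
    have hqle : ∫ r in Set.Ioc (0:ℝ) R, q r ≤
        ((n : ℝ) + 1) * ∫ r in Set.Ioi (0:ℝ), r ^ n * Real.exp (-h r) := by
      have hsplit : ∫ r in Set.Ioc (0:ℝ) R, ((((n:ℝ)+1) * r ^ n * Real.exp (-h r)) - q r)
          = (∫ r in Set.Ioc (0:ℝ) R, (((n:ℝ)+1) * r ^ n * Real.exp (-h r)))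
            - ∫ r in Set.Ioc (0:ℝ) R, q r := integral_sub hc_int hq_int
      have h1 : ∫ r in Set.Ioc (0:ℝ) R, q r
          = (∫ r in Set.Ioc (0:ℝ) R, (((n:ℝ)+1) * r ^ n * Real.exp (-h r))) - G R := by
        have := hFTC
        rw [hsplit, hG0] at this
        linarith
      rw [h1]
      have h2 : ∫ r in Set.Ioc (0:ℝ) R, (((n:ℝ)+1) * r ^ n * Real.exp (-h r))
          = ((n:ℝ)+1) * ∫ r in Set.Ioc (0:ℝ) R, r ^ n * Real.exp (-h r) := by
        rw [← integral_const_mul]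
        congr 1; ext r; ring
      rw [h2]
      have h3 : ∫ r in Set.Ioc (0:ℝ) R, r ^ n * Real.exp (-h r)
          ≤ ∫ r in Set.Ioi (0:ℝ), r ^ n * Real.exp (-h r) := by
        apply setIntegral_mono_set hint0
        · filter_upwards [ae_restrict_mem measurableSet_Ioi] with r hr
          exact mul_nonneg (pow_nonneg (le_of_lt hr) _) (Real.exp_nonneg _)
        · exact HasSubset.Subset.eventuallyLE Set.Ioc_subset_Ioi_self
      nlinarith [hGR]
    have hpt : m * ∫ r in Set.Ioc (0:ℝ) R, r ^ n * (r ^ 2 * Real.exp (-h r))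
        ≤ ∫ r in Set.Ioc (0:ℝ) R, q r := by
      rw [← integral_const_mul]
      apply setIntegral_mono_on
      · exact (hint2.mono_set Set.Ioc_subset_Ioi_self).const_mul m
      · exact hq_int
      · exact measurableSet_Ioc
      · intro r hr
        have hr0 : 0 < r := hr.1
        have hD : m * r ≤ D r := hgrow r hr0.le
        have : m * (r ^ n * (r ^ 2 * Real.exp (-h r)))
            = (m * r) * (r ^ (n+1) * Real.exp (-h r)) := by ring
        rw [this, hq_def]
        have hnn : 0 ≤ r ^ (n+1) * Real.exp (-h r) :=
          mul_nonneg (pow_nonneg hr0.le _) (Real.exp_nonneg _)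
        calc (m * r) * (r ^ (n+1) * Real.exp (-h r))
            ≤ D r * (r ^ (n+1) * Real.exp (-h r)) := mul_le_mul_of_nonneg_right hD hnn
          _ = r ^ (n+1) * D r * Real.exp (-h r) := by ring
    exact hpt.trans hqle
  have hunion : (⋃ N : ℕ, Set.Ioc (0:ℝ) (N:ℝ)) = Set.Ioi (0:ℝ) := by
    ext x
    simp only [Set.mem_iUnion, Set.mem_Ioc, Set.mem_Ioi]
    constructor
    · rintro ⟨N, hN, _⟩; exact hN
    · intro hx
      obtain ⟨N, hN⟩ := exists_nat_ge x
      exact ⟨N, hx, hN⟩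
  have htend : Filter.Tendsto (fun N : ℕ => m * ∫ r in Set.Ioc (0:ℝ) (N:ℝ),
      r ^ n * (r ^ 2 * Real.exp (-h r))) Filter.atTop
      (nhds (m * ∫ r in Set.Ioi (0:ℝ), r ^ n * (r ^ 2 * Real.exp (-h r)))) := by
    apply Filter.Tendsto.const_mul
    have := tendsto_setIntegral_of_monotone (s := fun N : ℕ => Set.Ioc (0:ℝ) (N:ℝ))
      (fun _ => measurableSet_Ioc)
      (fun i j hij => Set.Ioc_subset_Ioc_right (by exact_mod_cast hij))
      (by rw [hunion]; exact hint2)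
    rwa [hunion] at this
  exact le_of_tendsto htend (Filter.Eventually.of_forall key)

end Ray

section Polar
variable {E : Type*} [NormedAddCommGroup E] [NormedSpace ℝ E] [MeasurableSpace E]
  [BorelSpace E] [FiniteDimensional ℝ E]

local notation "dim" => Module.finrank ℝ

lemma volumeIoiPow_integral (n : ℕ) (F : ℝ → ℝ) :
    ∫ r : Set.Ioi (0:ℝ), F r ∂(MeasureTheory.Measure.volumeIoiPow n)
      = ∫ r in Set.Ioi (0:ℝ), r ^ n * F r := by
  simp only [Measure.volumeIoiPow, ENNReal.ofReal]
  rw [integral_withDensity_eq_integral_smul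
    ((measurable_subtype_coe.pow_const _).real_toNNReal),
    integral_subtype_comap measurableSet_Ioi fun a ↦ Real.toNNReal (a ^ n) • F a,
    setIntegral_congr_fun measurableSet_Ioi fun x hx ↦ ?_]
  rw [NNReal.smul_def, Real.coe_toNNReal _ (pow_nonneg (le_of_lt hx) _), smul_eq_mul]

lemma volumeIoiPow_integrable (n : ℕ) (F : ℝ → ℝ)
    (h : Integrable (fun r : Set.Ioi (0:ℝ) => F r) (MeasureTheory.Measure.volumeIoiPow n)) :
    IntegrableOn (fun r => r ^ n * F r) (Set.Ioi (0:ℝ)) := by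
  simp only [Measure.volumeIoiPow, ENNReal.ofReal] at h
  rw [integrable_withDensity_iff_integrable_smul
    ((measurable_subtype_coe.pow_const _).real_toNNReal)] at h
  have h2 : Integrable (fun r : Set.Ioi (0:ℝ) => (r:ℝ) ^ n * F r)
      (Measure.comap Subtype.val volume) := by
    apply h.congr
    filter_upwards with r
    rw [NNReal.smul_def, Real.coe_toNNReal _ (pow_nonneg (le_of_lt r.2) _), smul_eq_mul]
  rw [IntegrableOn, ← map_comap_subtype_coe measurableSet_Ioi]
  exact ((MeasurableEmbedding.subtype_coe measurableSet_Ioi).integrable_map_iff).2 h2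

variable [Nontrivial E] (μ : Measure E) [μ.IsAddHaarMeasure]

lemma polar_integral (φ : E → ℝ) :
    ∫ x, φ x ∂μ = ∫ z : sphere (0:E) 1 × Set.Ioi (0:ℝ), φ ((z.2 : ℝ) • (z.1 : E))
      ∂(μ.toSphere.prod (.volumeIoiPow (dim E - 1))) := by
  have step1 : ∫ x, φ x ∂μ = ∫ x : ({(0:E)}ᶜ : Set E), φ x ∂(μ.comap Subtype.val) := by
    rw [integral_subtype_comap (measurableSet_singleton _).compl fun x ↦ φ x,
      restrict_compl_singleton]
  rw [step1, ← (μ.measurePreserving_homeomorphUnitSphereProd).integral_comp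
    (Homeomorph.measurableEmbedding _) (fun z => φ ((z.2 : ℝ) • (z.1 : E)))]
  refine integral_congr_ae (Filter.Eventually.of_forall fun x => ?_)
  simp only [homeomorphUnitSphereProd_apply_snd_coe, homeomorphUnitSphereProd_apply_fst_coe,
    smul_inv_smul₀ (norm_ne_zero_iff.2 x.2)]

omit [Nontrivial E] in
lemma polar_integrable (φ : E → ℝ) (hφ : Integrable φ μ) :
    Integrable (fun z : sphere (0:E) 1 × Set.Ioi (0:ℝ) => φ ((z.2 : ℝ) • (z.1 : E)))
      (μ.toSphere.prod (.volumeIoiPow (dim E - 1))) := by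
  rw [← MeasurePreserving.integrable_comp_emb μ.measurePreserving_homeomorphUnitSphereProd
    (Homeomorph.measurableEmbedding _)]
  have h1 : Integrable (φ ∘ (Subtype.val : ({(0:E)}ᶜ : Set E) → E)) (μ.comap Subtype.val) := by
    rw [← (MeasurableEmbedding.subtype_coe
      (measurableSet_singleton (0:E)).compl).integrable_map_iff,
      map_comap_subtype_coe (measurableSet_singleton (0:E)).compl]
    exact hφ.integrableOn
  apply h1.congr
  filter_upwards with x
  simp only [Function.comp_apply, homeomorphUnitSphereProd_apply_snd_coe,
    homeomorphUnitSphereProd_apply_fst_coe, smul_inv_smul₀ (norm_ne_zero_iff.2 x.2)]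

end Polar

section Gauss

lemma gauss_integrable {V : Type*} [NormedAddCommGroup V] [InnerProductSpace ℝ V]
    [FiniteDimensional ℝ V] [MeasurableSpace V] [BorelSpace V] {b : ℝ} (hb : 0 < b) :
    Integrable (fun x : V => Real.exp (-b * ‖x‖ ^ 2)) := by
  have h := (GaussianFourier.integrable_cexp_neg_mul_sq_norm_add (V := V) (b := (b:ℂ))
    (by simpa using hb) 0 (0:V)).norm
  apply h.congr
  filter_upwards with v
  rw [Complex.norm_exp]
  congr 1
  simp [Complex.ofReal_pow]
  left
  norm_cast

end Gauss

/-- The probability measure `π` with density proportional to `exp (-f)`. -/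
noncomputable def gibbsMeasure (p : ℕ) (f : EuclideanSpace ℝ (Fin p) → ℝ) :
    Measure (EuclideanSpace ℝ (Fin p)) :=
  (ENNReal.ofReal (∫ θ, Real.exp (-f θ)))⁻¹ •
    volume.withDensity (fun θ => ENNReal.ofReal (Real.exp (-f θ)))

set_option maxHeartbeats 2000000 in
theorem second_moment_bound (p : ℕ) (f : EuclideanSpace ℝ (Fin p) → ℝ)
    (m : ℝ) (hm : 0 < m) (hdiff : Differentiable ℝ f)
    (hsc : ∀ θ y : EuclideanSpace ℝ (Fin p),
      f y ≥ f θ + inner ℝ (gradient f θ) (y - θ) + m / 2 * ‖y - θ‖ ^ 2)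
    (θs : EuclideanSpace ℝ (Fin p)) (hθs : gradient f θs = 0)
    (hfin : Integrable (fun θ => Real.exp (-f θ))) :
    ∫ y, ‖y - θs‖ ^ 2 ∂(gibbsMeasure p f) ≤ p / m := by
  have hfc : Continuous f := hdiff.continuous
  have hexpc : Continuous (fun θ : EuclideanSpace ℝ (Fin p) => Real.exp (-f θ)) := (hfc.neg).rexp
  set Z : ℝ := ∫ θ, Real.exp (-f θ) with hZ
  have hZpos : 0 < Z := by
    rw [hZ, integral_pos_iff_support_of_nonneg (fun θ => Real.exp_nonneg _) hfin]
    have hsupp : Function.support (fun θ : EuclideanSpace ℝ (Fin p) => Real.exp (-f θ)) = Set.univ := by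
      ext θ; simp [Function.mem_support, Real.exp_ne_zero]
    rw [hsupp]
    exact isOpen_univ.measure_pos volume ⟨θs, trivial⟩
  -- reduce the Gibbs integral to Lebesgue integrals
  have hgibbs : ∫ y, ‖y - θs‖ ^ 2 ∂(gibbsMeasure p f)
      = Z⁻¹ * ∫ y, ‖y - θs‖ ^ 2 * Real.exp (-f y) := by
    rw [gibbsMeasure]
    simp only [ENNReal.ofReal]
    rw [integral_smul_measure, integral_withDensity_eq_integral_smul
      (hexpc.measurable.real_toNNReal)]
    rw [ENNReal.toReal_inv, ENNReal.coe_toReal, Real.coe_toNNReal _ (le_of_lt hZpos)]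
    rw [smul_eq_mul]
    congr 1
    refine integral_congr_ae (Filter.Eventually.of_forall fun y => ?_)
    simp only [NNReal.smul_def, smul_eq_mul]
    rw [Real.coe_toNNReal _ (Real.exp_nonneg _), mul_comm]
  rw [hgibbs]
  -- trivial case p = 0
  rcases Nat.eq_zero_or_pos p with hp0 | hp
  · subst hp0
    have hy : ∀ y : EuclideanSpace ℝ (Fin 0), ‖y - θs‖ ^ 2 * Real.exp (-f y) = 0 := by
      intro y
      have : y = θs := Subsingleton.elim _ _
      simp [this]
    simp only [hy, integral_zero, mul_zero]
    positivity
  -- main case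
  haveI : Nontrivial (EuclideanSpace ℝ (Fin p)) := by
    apply Module.nontrivial_of_finrank_pos (R := ℝ)
    rw [finrank_euclideanSpace_fin]
    omega
  have hdim : Module.finrank ℝ (EuclideanSpace ℝ (Fin p)) = p := finrank_euclideanSpace_fin
  set g : EuclideanSpace ℝ (Fin p) → ℝ := fun x => f (x + θs) with hgdef
  have hgc : Continuous g := hfc.comp (continuous_id.add continuous_const)
  -- strong convexity: gradient monotonicity
  have hgradmono : ∀ θ y : EuclideanSpace ℝ (Fin p), m * ‖y - θ‖ ^ 2
      ≤ inner ℝ (gradient f y) (y - θ) - inner ℝ (gradient f θ) (y - θ) := by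
    intro θ y
    have h1 := hsc θ y
    have h2 := hsc y θ
    have e1 : (inner ℝ (gradient f y) (θ - y) : ℝ) = - inner ℝ (gradient f y) (y - θ) := by
      rw [← inner_neg_right, neg_sub]
    have e2 : ‖θ - y‖ = ‖y - θ‖ := norm_sub_rev _ _
    rw [e1, e2] at h2
    linarith
  -- quadratic lower bound
  have hquad : ∀ x : EuclideanSpace ℝ (Fin p), f θs + m / 2 * ‖x‖ ^ 2 ≤ g x := by
    intro x
    have := hsc θs (x + θs)
    rw [hθs] at this
    simpa [inner_zero_left] using this
  -- integrability after translation
  have hgexp_int : Integrable (fun x : EuclideanSpace ℝ (Fin p) => Real.exp (-g x)) := by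
    have hmp : MeasurePreserving (fun x : EuclideanSpace ℝ (Fin p) => x + θs) volume volume :=
      measurePreserving_add_right volume θs
    exact (hmp.integrable_comp_emb (Homeomorph.addRight θs).measurableEmbedding).2 hfin
  have hg2_int : Integrable (fun x : EuclideanSpace ℝ (Fin p) => ‖x‖ ^ 2 * Real.exp (-g x)) := by
    have hgauss : Integrable (fun x : EuclideanSpace ℝ (Fin p) => Real.exp (-(m/4) * ‖x‖ ^ 2)) :=
      gauss_integrable (by linarith)
    apply Integrable.mono' (hgauss.const_mul (4 / m * Real.exp (-f θs)))
    · exact ((continuous_norm.pow 2).mul ((hgc.neg).rexp)).aestronglyMeasurable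
    · filter_upwards with x
      have hu : (0:ℝ) ≤ m / 4 * ‖x‖ ^ 2 := by positivity
      have h1 : ‖x‖ ^ 2 ≤ 4 / m * Real.exp (m / 4 * ‖x‖ ^ 2) := by
        have := Real.add_one_le_exp (m / 4 * ‖x‖ ^ 2)
        have h' : m / 4 * ‖x‖ ^ 2 ≤ Real.exp (m / 4 * ‖x‖ ^ 2) := by linarith
        calc ‖x‖ ^ 2 = 4 / m * (m / 4 * ‖x‖ ^ 2) := by field_simp
          _ ≤ 4 / m * Real.exp (m / 4 * ‖x‖ ^ 2) := by
              apply mul_le_mul_of_nonneg_left h' (by positivity)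
      have h2 : Real.exp (-g x) ≤ Real.exp (-f θs) * Real.exp (-(m / 2 * ‖x‖ ^ 2)) := by
        rw [← Real.exp_add]
        exact Real.exp_le_exp.2 (by linarith [hquad x])
      have hnn : (0:ℝ) ≤ ‖x‖ ^ 2 * Real.exp (-g x) := by positivity
      rw [Real.norm_eq_abs, abs_of_nonneg hnn]
      calc ‖x‖ ^ 2 * Real.exp (-g x)
          ≤ (4 / m * Real.exp (m / 4 * ‖x‖ ^ 2)) *
            (Real.exp (-f θs) * Real.exp (-(m / 2 * ‖x‖ ^ 2))) := by
            apply mul_le_mul h1 h2 (Real.exp_nonneg _) (by positivity)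
        _ = 4 / m * Real.exp (-f θs) *
              (Real.exp (m / 4 * ‖x‖ ^ 2) * Real.exp (-(m / 2 * ‖x‖ ^ 2))) := by ring
        _ = 4 / m * Real.exp (-f θs) * Real.exp (-(m/4) * ‖x‖ ^ 2) := by
            rw [← Real.exp_add]
            congr 2
            ring
  -- translation of the integrals
  have htrans2 : ∫ y, ‖y - θs‖ ^ 2 * Real.exp (-f y)
      = ∫ x, ‖x‖ ^ 2 * Real.exp (-g x) := by
    rw [← integral_add_right_eq_self (μ := volume)
      (fun y : EuclideanSpace ℝ (Fin p) => ‖y - θs‖ ^ 2 * Real.exp (-f y)) θs]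
    refine integral_congr_ae (Filter.Eventually.of_forall fun x => ?_)
    simp [add_sub_cancel_right, g]
  have htrans0 : Z = ∫ x, Real.exp (-g x) := by
    rw [hZ, ← integral_add_right_eq_self (μ := volume)
      (fun y : EuclideanSpace ℝ (Fin p) => Real.exp (-f y)) θs]
  -- the key inequality via polar coordinates
  have key : m * ∫ x, ‖x‖ ^ 2 * Real.exp (-g x) ≤ p * ∫ x, Real.exp (-g x) := by
    set n : ℕ := p - 1 with hn
    have hnp : (n : ℝ) + 1 = p := by
      have h' : n + 1 = p := Nat.succ_pred_eq_of_pos hp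
      exact_mod_cast congrArg (Nat.cast : ℕ → ℝ) h'
    have hdim1 : Module.finrank ℝ (EuclideanSpace ℝ (Fin p)) - 1 = n := by rw [hdim]
    rw [polar_integral volume (fun x => ‖x‖ ^ 2 * Real.exp (-g x)),
        polar_integral volume (fun x => Real.exp (-g x)), hdim1]
    have hF2 := polar_integrable volume _ hg2_int
    have hF0 := polar_integrable volume _ hgexp_int
    rw [hdim1] at hF2 hF0
    rw [integral_prod _ hF2, integral_prod _ hF0, ← integral_const_mul, ← integral_const_mul]
    apply integral_mono_ae (hF2.integral_prod_left.const_mul m)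
      (hF0.integral_prod_left.const_mul (p : ℝ))
    filter_upwards [hF2.prod_right_ae, hF0.prod_right_ae] with ω h2 h0
    have hω1 : ‖(ω : EuclideanSpace ℝ (Fin p))‖ = 1 := mem_sphere_zero_iff_norm.1 ω.2
    set hh : ℝ → ℝ := fun r => f (r • (ω : EuclideanSpace ℝ (Fin p)) + θs) with hhdef
    set Dw : ℝ → ℝ := fun r =>
      (inner ℝ (gradient f (r • (ω : EuclideanSpace ℝ (Fin p)) + θs))
        (ω : EuclideanSpace ℝ (Fin p)) : ℝ) with hDdef
    have hnorm : ∀ r : ℝ, 0 < r → ‖r • (ω : EuclideanSpace ℝ (Fin p))‖ = r := by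
      intro r hr
      rw [norm_smul, hω1, mul_one, Real.norm_eq_abs, abs_of_pos hr]
    -- rewrite both inner integrals as Lebesgue integrals on (0, ∞)
    have e2 : ∫ r : Set.Ioi (0:ℝ),
        ‖(r : ℝ) • (ω : EuclideanSpace ℝ (Fin p))‖ ^ 2 * Real.exp (-g ((r : ℝ) • ω))
          ∂(MeasureTheory.Measure.volumeIoiPow n)
        = ∫ r in Set.Ioi (0:ℝ), r ^ n * (r ^ 2 * Real.exp (-hh r)) := by
      rw [volumeIoiPow_integral n (fun r =>
        ‖r • (ω : EuclideanSpace ℝ (Fin p))‖ ^ 2 * Real.exp (-g (r • ω)))]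
      refine setIntegral_congr_fun measurableSet_Ioi fun r hr => ?_
      rw [hnorm r hr]
    have e0 : ∫ r : Set.Ioi (0:ℝ), Real.exp (-g ((r : ℝ) • ω))
          ∂(MeasureTheory.Measure.volumeIoiPow n)
        = ∫ r in Set.Ioi (0:ℝ), r ^ n * Real.exp (-hh r) := by
      rw [volumeIoiPow_integral n (fun r =>
        Real.exp (-g (r • (ω : EuclideanSpace ℝ (Fin p)))))]
    have int2 : IntegrableOn (fun r : ℝ => r ^ n * (r ^ 2 * Real.exp (-hh r)))
        (Set.Ioi (0:ℝ)) := by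
      have := volumeIoiPow_integrable n (fun r =>
        ‖r • (ω : EuclideanSpace ℝ (Fin p))‖ ^ 2 * Real.exp (-g (r • ω))) h2
      refine this.congr_fun (fun r hr => ?_) measurableSet_Ioi
      simp only [hnorm r hr, hgdef, hhdef]
    have int0 : IntegrableOn (fun r : ℝ => r ^ n * Real.exp (-hh r)) (Set.Ioi (0:ℝ)) := by
      have := volumeIoiPow_integrable n (fun r =>
        Real.exp (-g (r • (ω : EuclideanSpace ℝ (Fin p))))) h0
      refine this.congr_fun (fun r hr => ?_) measurableSet_Ioi
      simp only [hgdef, hhdef]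
    -- derivative of hh along the ray
    have hder : ∀ r : ℝ, HasDerivAt hh (Dw r) r := by
      intro r
      have hL : HasDerivAt (fun t : ℝ => t • (ω : EuclideanSpace ℝ (Fin p)) + θs)
          (ω : EuclideanSpace ℝ (Fin p)) r := by
        simpa using ((hasDerivAt_id r).smul_const
          ((ω : EuclideanSpace ℝ (Fin p)))).add_const θs
      have hfd := ((hdiff (r • (ω : EuclideanSpace ℝ (Fin p)) + θs)).hasGradientAt).hasFDerivAt
      have := hfd.comp_hasDerivAt r hL
      simp only [hhdef, hDdef]
      simpa [InnerProductSpace.toDual_apply_apply, Function.comp_def] using this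
    have hlip : ∀ r s : ℝ, r ≤ s → m * (s - r) ≤ Dw s - Dw r := by
      intro r s hrs
      rcases eq_or_lt_of_le hrs with heq | hlt
      · subst heq; simp
      · have h1 := hgradmono (r • (ω : EuclideanSpace ℝ (Fin p)) + θs)
          (s • (ω : EuclideanSpace ℝ (Fin p)) + θs)
        have hdiffpt : (s • (ω : EuclideanSpace ℝ (Fin p)) + θs)
            - (r • (ω : EuclideanSpace ℝ (Fin p)) + θs)
            = (s - r) • (ω : EuclideanSpace ℝ (Fin p)) := by
          rw [add_sub_add_right_eq_sub, ← sub_smul]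
        rw [hdiffpt, hnorm (s - r) (by linarith), real_inner_smul_right,
          real_inner_smul_right] at h1
        simp only [hDdef]
        nlinarith [h1, hlt]
    have hmonoD : Monotone Dw := by
      intro a b hab
      have := hlip a b hab
      nlinarith [mul_nonneg hm.le (sub_nonneg.2 hab)]
    have hD0 : Dw 0 = 0 := by
      simp only [hDdef, zero_smul, zero_add, hθs, inner_zero_left]
    have hgrow : ∀ r : ℝ, 0 ≤ r → m * r ≤ Dw r := by
      intro r hr
      have := hlip 0 r hr
      rw [hD0] at this
      linarith
    have hlow : ∀ r : ℝ, 0 ≤ r → hh 0 ≤ hh r := by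
      intro r hr
      have hq := hquad (r • (ω : EuclideanSpace ℝ (Fin p)))
      have h0' : hh 0 = f θs := by simp [hhdef]
      have hr' : g (r • (ω : EuclideanSpace ℝ (Fin p))) = hh r := by
        simp only [hgdef, hhdef]
      rw [h0']
      nlinarith [hq, sq_nonneg ‖r • (ω : EuclideanSpace ℝ (Fin p))‖, hr' ▸ hq]
    rw [e2, e0, ← hnp]
    exact ray1d n m hh Dw hder hmonoD hD0 hgrow hlow int0 int2
  rw [htrans2]
  have hfinal : ∫ x, ‖x‖ ^ 2 * Real.exp (-g x) ≤ p / m * Z := by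
    rw [htrans0, div_mul_eq_mul_div, le_div_iff₀ hm]
    calc (∫ x, ‖x‖ ^ 2 * Real.exp (-g x)) * m
        = m * ∫ x, ‖x‖ ^ 2 * Real.exp (-g x) := by ring
      _ ≤ p * ∫ x, Real.exp (-g x) := key
  calc Z⁻¹ * ∫ x, ‖x‖ ^ 2 * Real.exp (-g x) ≤ Z⁻¹ * (p / m * Z) := by
        apply mul_le_mul_of_nonneg_left hfinal (inv_nonneg.2 hZpos.le)
    _ = p / m := by field_simp
end

section
/- Let (r_k)_{k ≥ 0} be a sequence of nonnegative reals, let κ∞ ≥ 1 and A > 0, and suppose r_{k_0} ≤ A/κ∞ for some index k_0, and that for all k ≥ k_0, r_{k+1} ≤ ((1 - η_k)/(1 + η_k)) r_k + A η_k²/(1 + η_k) with η_k = 1/(κ∞ + k - k_0). Then for every k ≥ k_0, r_k ≤ A/(κ∞ + k - k_0). -/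
theorem variable_step_recursion (r : ℕ → ℝ) (hr : ∀ k, 0 ≤ r k)
    (κ A : ℝ) (hκ : 1 ≤ κ) (hA : 0 < A) (k₀ : ℕ)
    (hinit : r k₀ ≤ A / κ)
    (hrec : ∀ k ≥ k₀, r (k + 1) ≤
      (1 - 1 / (κ + (k - k₀ : ℕ))) / (1 + 1 / (κ + (k - k₀ : ℕ))) * r k +
        A * (1 / (κ + (k - k₀ : ℕ))) ^ 2 / (1 + 1 / (κ + (k - k₀ : ℕ)))) :
    ∀ k ≥ k₀, r k ≤ A / (κ + (k - k₀ : ℕ)) := by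
  intro k hk
  induction k, hk using Nat.le_induction with
  | base => simpa using hinit
  | succ k hk ih =>
    have hcast : ((k + 1 - k₀ : ℕ) : ℝ) = ((k - k₀ : ℕ) : ℝ) + 1 := by
      rw [Nat.succ_sub hk]; push_cast; ring
    set t : ℝ := κ + ((k - k₀ : ℕ) : ℝ) with ht
    have ht1 : (1 : ℝ) ≤ t := by
      have h := (Nat.cast_nonneg (k - k₀) : (0:ℝ) ≤ _)
      simp only [ht]; linarith
    have ht0 : (0 : ℝ) < t := by linarith
    have hden : (0 : ℝ) < 1 + 1 / t := by positivity
    have hcoef : (0 : ℝ) ≤ (1 - 1 / t) / (1 + 1 / t) := by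
      apply div_nonneg _ hden.le
      have : 1 / t ≤ 1 := by
        rw [div_le_one ht0]; exact ht1
      linarith
    have h1 := hrec k hk
    have h2 : (1 - 1 / t) / (1 + 1 / t) * r k + A * (1 / t) ^ 2 / (1 + 1 / t)
        ≤ (1 - 1 / t) / (1 + 1 / t) * (A / t) + A * (1 / t) ^ 2 / (1 + 1 / t) := by
      gcongr
    have h3 : (1 - 1 / t) / (1 + 1 / t) * (A / t) + A * (1 / t) ^ 2 / (1 + 1 / t)
        = A / (t + 1) := by
      field_simp
      ring
    have hgoal : κ + ((k + 1 - k₀ : ℕ) : ℝ) = t + 1 := by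
      rw [hcast, ht]; ring
    rw [hgoal]
    calc r (k + 1) ≤ _ := h1
      _ ≤ _ := h2
      _ = A / (t + 1) := h3
end
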